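/- With the noise coefficients σ_k as defined (depending on N ≥ 1 and a_τ > 0), for every x ∈ ℝ² and all indices i, l, m ∈ {1,2} one has Σ_{k∈K} σ_k^i(x) · ∂_{x_m} σ_k^l(x) = 0; that is, the mirror symmetry of the noise makes all first derivatives of the spatial covariance vanish on the diagonal. -/
import Mathlib


open Real Filter
open scoped Classical

noncomputable section

/-- Squared Euclidean norm of a lattice vector `k ∈ ℤ²`. -/
def knormSq (k : ℤ × ℤ) : ℝ := ((k.1 : ℝ)) ^ 2 + ((k.2 : ℝ)) ^ 2

/-- Euclidean norm `|k|` of a lattice vector `k ∈ ℤ²`. -/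
def knorm (k : ℤ × ℤ) : ℝ := Real.sqrt (knormSq k)

/-- The rotated vector `k^⊥ = (-k₂, k₁)`, as a vector of `ℝ²`. -/
def kperp (k : ℤ × ℤ) : Fin 2 → ℝ := ![-(k.2 : ℝ), (k.1 : ℝ)]

/-- Dot product `k·x` of a lattice vector with `x ∈ ℝ²`. -/
def kdot (k : ℤ × ℤ) (x : Fin 2 → ℝ) : ℝ := (k.1 : ℝ) * x 0 + (k.2 : ℝ) * x 1

/-- The dyadic annulus condition `N ≤ |k| ≤ 2N`. -/
def inAnnulus (N : ℕ) (k : ℤ × ℤ) : Prop := (N : ℝ) ≤ knorm k ∧ knorm k ≤ 2 * N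

/-- The noise amplitude `θ_k = a_τ/|k|²` on the annulus `N ≤ |k| ≤ 2N`, `0` elsewhere. -/
def θcoef (N : ℕ) (aτ : ℝ) (k : ℤ × ℤ) : ℝ :=
  if inAnnulus N k then aτ / knorm k ^ 2 else 0

/-- The half-lattice `K₊ = K_{++} ∪ K_{+-}`. -/
def KPlus (k : ℤ × ℤ) : Prop := (0 ≤ k.1 ∧ 0 < k.2) ∨ (0 < k.1 ∧ k.2 ≤ 0)

/-- The half-lattice `K₋ = K_{-+} ∪ K_{--}`. -/
def KMinus (k : ℤ × ℤ) : Prop := (k.1 < 0 ∧ 0 ≤ k.2) ∨ (k.1 ≤ 0 ∧ k.2 < 0)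

/-- The noise coefficients: `σ_k(x) = θ_k (k^⊥/|k|) cos(k·x)` for `k ∈ K₊`,
`σ_k(x) = θ_k (k^⊥/|k|) sin(k·x)` for `k ∈ K₋`, and `0` for `k = 0`. -/
def σcoef (N : ℕ) (aτ : ℝ) (k : ℤ × ℤ) (x : Fin 2 → ℝ) : Fin 2 → ℝ :=
  if KPlus k then (θcoef N aτ k * Real.cos (kdot k x) / knorm k) • kperp k
  else if KMinus k then (θcoef N aτ k * Real.sin (kdot k x) / knorm k) • kperp k
  else 0

/-- A finite box of lattice points containing the annulus `N ≤ |k| ≤ 2N`; summing over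
it realizes the (finite) sum over `k ∈ K`, since `θ_k` vanishes off the annulus. -/
def latticeBox (N : ℕ) : Finset (ℤ × ℤ) :=
  Finset.Icc (-(2 * (N : ℤ)), -(2 * (N : ℤ))) (2 * (N : ℤ), 2 * (N : ℤ))


/-- The linear functional `v ↦ k·v` as a continuous linear map. -/
def kdotL (k : ℤ × ℤ) : (Fin 2 → ℝ) →L[ℝ] ℝ :=
  (k.1 : ℝ) • ContinuousLinearMap.proj 0 + (k.2 : ℝ) • ContinuousLinearMap.proj 1

lemma kdotL_apply (k : ℤ × ℤ) (v : Fin 2 → ℝ) :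
    kdotL k v = (k.1 : ℝ) * v 0 + (k.2 : ℝ) * v 1 := by
  simp [kdotL]

lemma hasFDerivAt_kdot (k : ℤ × ℤ) (x : Fin 2 → ℝ) :
    HasFDerivAt (fun y => kdot k y) (kdotL k) x := by
  have h : (fun y : Fin 2 → ℝ => kdot k y) = fun y => kdotL k y := by
    funext y; rw [kdotL_apply]; rfl
  rw [h]
  exact (kdotL k).hasFDerivAt

lemma knorm_neg (k : ℤ × ℤ) : knorm (-k) = knorm k := by
  unfold knorm knormSq
  simp only [Prod.fst_neg, Prod.snd_neg]
  push_cast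
  ring_nf

lemma θcoef_neg (N : ℕ) (aτ : ℝ) (k : ℤ × ℤ) : θcoef N aτ (-k) = θcoef N aτ k := by
  unfold θcoef inAnnulus
  rw [knorm_neg]

lemma kperp_neg (k : ℤ × ℤ) (l : Fin 2) : kperp (-k) l = -(kperp k l) := by
  fin_cases l <;> simp [kperp]

lemma kdot_neg (k : ℤ × ℤ) (x : Fin 2 → ℝ) : kdot (-k) x = -(kdot k x) := by
  unfold kdot; simp only [Prod.fst_neg, Prod.snd_neg]; push_cast; ring

lemma kdotL_neg (k : ℤ × ℤ) (v : Fin 2 → ℝ) : kdotL (-k) v = -(kdotL k v) := by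
  rw [kdotL_apply, kdotL_apply]; simp only [Prod.fst_neg, Prod.snd_neg]; push_cast; ring

lemma fderiv_sigma_plus (N : ℕ) (aτ : ℝ) (k : ℤ × ℤ) (x : Fin 2 → ℝ) (l : Fin 2)
    (hk : KPlus k) :
    fderiv ℝ (fun y => σcoef N aτ k y l) x =
      ((θcoef N aτ k * kperp k l / knorm k) * (-Real.sin (kdot k x))) • kdotL k := by
  have heq : (fun y => σcoef N aτ k y l) =
      fun y => (θcoef N aτ k * kperp k l / knorm k) * Real.cos (kdot k y) := by
    funext y; simp [σcoef, hk]; ring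
  rw [heq]
  have h := ((hasFDerivAt_kdot k x).cos).const_mul (θcoef N aτ k * kperp k l / knorm k)
  rw [h.fderiv, smul_smul]

lemma fderiv_sigma_minus (N : ℕ) (aτ : ℝ) (k : ℤ × ℤ) (x : Fin 2 → ℝ) (l : Fin 2)
    (hnp : ¬ KPlus k) (hk : KMinus k) :
    fderiv ℝ (fun y => σcoef N aτ k y l) x =
      ((θcoef N aτ k * kperp k l / knorm k) * Real.cos (kdot k x)) • kdotL k := by
  have heq : (fun y => σcoef N aτ k y l) =
      fun y => (θcoef N aτ k * kperp k l / knorm k) * Real.sin (kdot k y) := by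
    funext y; simp [σcoef, hnp, hk]; ring
  rw [heq]
  have h := ((hasFDerivAt_kdot k x).sin).const_mul (θcoef N aτ k * kperp k l / knorm k)
  rw [h.fderiv, smul_smul]

lemma kplus_neg_of_kminus {k : ℤ × ℤ} (h : KMinus k) : KPlus (-k) := by
  unfold KPlus KMinus at *
  simp only [Prod.fst_neg, Prod.snd_neg]
  omega

lemma kminus_neg_of_kplus {k : ℤ × ℤ} (h : KPlus k) : KMinus (-k) := by
  unfold KPlus KMinus at *
  simp only [Prod.fst_neg, Prod.snd_neg]
  omega

lemma not_kplus_of_kminus {k : ℤ × ℤ} (h : KMinus k) : ¬ KPlus k := by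
  unfold KPlus KMinus at *
  omega

lemma cancel_pair (N : ℕ) (aτ : ℝ) (x : Fin 2 → ℝ) (i l m : Fin 2) (k : ℤ × ℤ) :
    σcoef N aτ k x i * fderiv ℝ (fun y => σcoef N aτ k y l) x (Pi.single m (1 : ℝ))
      + σcoef N aτ (-k) x i *
          fderiv ℝ (fun y => σcoef N aτ (-k) y l) x (Pi.single m (1 : ℝ)) = 0 := by
  by_cases hp : KPlus k
  · have hm' : KMinus (-k) := kminus_neg_of_kplus hp
    have hnp : ¬ KPlus (-k) := not_kplus_of_kminus hm'
    rw [fderiv_sigma_plus N aτ k x l hp, fderiv_sigma_minus N aτ (-k) x l hnp hm']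
    simp only [σcoef, hp, hnp, hm', if_pos, if_neg, if_true, ite_true, ite_false,
      Pi.smul_apply, smul_eq_mul, ContinuousLinearMap.smul_apply,
      θcoef_neg, knorm_neg, kperp_neg, kdot_neg, kdotL_neg, Real.sin_neg, Real.cos_neg]
    ring
  · by_cases hm : KMinus k
    · have hp' : KPlus (-k) := kplus_neg_of_kminus hm
      rw [fderiv_sigma_minus N aτ k x l hp hm, fderiv_sigma_plus N aτ (-k) x l hp']
      simp only [σcoef, hp, hm, hp', if_pos, if_neg, if_true, ite_true, ite_false,
        Pi.smul_apply, smul_eq_mul, ContinuousLinearMap.smul_apply,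
        θcoef_neg, knorm_neg, kperp_neg, kdot_neg, kdotL_neg, Real.sin_neg, Real.cos_neg]
      ring
    · have hσ : ∀ y : Fin 2 → ℝ, ∀ j : Fin 2, σcoef N aτ k y j = 0 := by
        intro y j; simp [σcoef, hp, hm]
      have hk0 : k = 0 := by
        unfold KPlus at hp; unfold KMinus at hm
        have h1 : k.1 = 0 := by omega
        have h2 : k.2 = 0 := by omega
        exact Prod.ext h1 h2
      subst hk0
      rw [hσ x i, show (-(0 : ℤ × ℤ)) = 0 from neg_zero, hσ x i]
      ring

/-- Mirror symmetry of the noise: all first derivatives of the spatial covariance vanish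
on the diagonal, i.e. `Σ_{k∈K} σ_k^i(x) ∂_{x_m} σ_k^l(x) = 0` for all `i, l, m`. -/
theorem noise_mirror_symmetry (N : ℕ) (hN : 1 ≤ N) (aτ : ℝ) (haτ : 0 < aτ) :
    ∀ x : Fin 2 → ℝ, ∀ i l m : Fin 2,
      ∑ k ∈ latticeBox N,
          σcoef N aτ k x i *
            fderiv ℝ (fun y => σcoef N aτ k y l) x (Pi.single m (1 : ℝ)) = 0 := by
  intro x i l m
  apply Finset.sum_involution (fun a _ => -a)
  · intro a _
    exact cancel_pair N aτ x i l m a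
  · intro a _ hfa h
    apply hfa
    have ha0 : a = 0 := by
      have := neg_eq_iff_eq_neg.mp h
      have h1 : a.1 = 0 := by
        have := congrArg Prod.fst h
        simp only [Prod.fst_neg] at this
        omega
      have h2 : a.2 = 0 := by
        have := congrArg Prod.snd h
        simp only [Prod.snd_neg] at this
        omega
      exact Prod.ext h1 h2
    rw [ha0]
    have : σcoef N aτ 0 x i = 0 := by
      simp [σcoef, KPlus, KMinus]
    rw [this]; ring
  · intro a _
    exact neg_neg a
  · intro a ha
    simp only [latticeBox, Finset.mem_Icc, Prod.le_def, Prod.fst_neg, Prod.snd_neg] at ha ⊢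
    omega
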